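/- There exists a universal constant C > 0 with the following property. For every ε ∈ (0, 1/2], every positive integer m, and every centered Gaussian random vector (Y_1, …, Y_m) on ℝ^m with positive semidefinite covariance matrix Σ satisfying Σ_ii ≤ ε² for every i ∈ {1,…,m} and Σ_{i=1}^m Σ_ii ≤ 1, one has E[max(0, max_{i∈[m]} Y_i)] ≤ C · ε · √(ln(1/ε)). -/

import Mathlib

/-!
A coordinate of variance `v ≤ ε²` is sub-Gaussian, so `P(Y_i ≥ t) ≤ exp (-t² / (2v))`, and for
`t² ≥ 2ε²` this is at most `(v / ε²) exp (-t² / (2ε²))`. Summing over `i` with `∑ v_i ≤ 1` bounds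
the tail of the maximum by `exp (-t² / (2ε²)) / ε² ≤ exp (-t² / (4ε²))` once `t ≥ 3ε √(ln (1/ε))`,
and the layer-cake formula turns this into `E[max(0, maxᵢ Yᵢ)] ≤ 3ε √(ln (1/ε)) + ε √π`.
-/

open MeasureTheory ProbabilityTheory Real Set
open scoped NNReal ENNReal

lemma exp_neg_div_le_mul_exp_neg {u r : ℝ} (hu0 : 0 < u) (hu1 : u ≤ 1) (hr : 1 ≤ r) :
    exp (-(r / u)) ≤ u * exp (-r) := by
  have hx : 1 ≤ 1 / u := by rw [le_div_iff₀ hu0]; linarith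
  have key : 1 / u ≤ exp (r * (1 / u - 1)) :=
    calc 1 / u ≤ exp (1 / u - 1) := by linarith [add_one_le_exp (1 / u - 1)]
      _ ≤ exp (r * (1 / u - 1)) := exp_le_exp.2 (by nlinarith)
  rw [div_le_iff₀ hu0] at key
  calc exp (-(r / u)) ≤ exp (-(r / u)) * (exp (r * (1 / u - 1)) * u) :=
        le_mul_of_one_le_right (exp_nonneg _) key
    _ = u * exp (-r) := by rw [← mul_assoc, ← exp_add, mul_comm]; ring_nf

lemma hasSubgaussianMGF_id_gaussianReal (v : ℝ≥0) : HasSubgaussianMGF id v (gaussianReal 0 v) where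
  integrable_exp_mul t := integrable_exp_mul_gaussianReal t
  mgf_le t := by simp [mgf_id_gaussianReal]

lemma gaussianReal_real_Ici_le_mul_exp {v : ℝ≥0} {s t : ℝ} (hvs : v ≤ s) (hst : 2 * s ≤ t ^ 2)
    (ht : 0 < t) : (gaussianReal 0 v).real (Ici t) ≤ v / s * exp (-t ^ 2 / (2 * s)) := by
  rcases eq_zero_or_pos v with rfl | hv
  · simp [gaussianReal_zero_var, measureReal_def, ht]
  have hs : 0 < s := lt_of_lt_of_le (by exact_mod_cast hv) hvs
  calc (gaussianReal 0 v).real (Ici t) ≤ exp (-t ^ 2 / (2 * v)) :=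
        (hasSubgaussianMGF_id_gaussianReal v).measure_ge_le ht.le
    _ = exp (-((t ^ 2 / (2 * s)) / (v / s))) := by field_simp
    _ ≤ v / s * exp (-(t ^ 2 / (2 * s))) := by
        refine exp_neg_div_le_mul_exp_neg (by positivity) ((div_le_one hs).2 hvs) ?_
        rwa [one_le_div (by positivity)]
    _ = v / s * exp (-t ^ 2 / (2 * s)) := by rw [neg_div]

section

variable {Ω : Type*} [MeasurableSpace Ω] {P : Measure Ω}

lemma map_eq_gaussianReal_diag {ι : Type*} [Fintype ι] [DecidableEq ι] {Y : ι → Ω → ℝ}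
    {S : Matrix ι ι ℝ}
    (hYS : ∀ a : ι → ℝ, P.map (fun ω ↦ ∑ i, a i * Y i ω)
      = gaussianReal 0 (∑ i, ∑ j, a i * S i j * a j).toNNReal) (i : ι) :
    P.map (Y i) = gaussianReal 0 (S i i).toNNReal := by
  simpa [Pi.single_apply] using hYS (Pi.single i 1)

lemma measureReal_lt_max_zero_iSup_le [IsFiniteMeasure P] {ι : Type*} [Fintype ι]
    {Y : ι → Ω → ℝ} (hY : ∀ i, Measurable (Y i)) {v : ι → ℝ≥0}
    (hYv : ∀ i, P.map (Y i) = gaussianReal 0 (v i)) {s t : ℝ} (hvs : ∀ i, v i ≤ s)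
    (hst : 2 * s ≤ t ^ 2) (ht : 0 < t) :
    P.real {ω | t < max 0 (⨆ i, Y i ω)} ≤ (∑ i, (v i : ℝ)) / s * exp (-t ^ 2 / (2 * s)) := by
  have hsub : {ω | t < max 0 (⨆ i, Y i ω)} ⊆ ⋃ i, Y i ⁻¹' Ici t := by
    intro ω hω
    have : t < ⨆ i, Y i ω := (lt_max_iff.1 hω).resolve_left ht.not_gt
    rcases isEmpty_or_nonempty ι with hι | hι
    · simp [Real.iSup_of_isEmpty] at this; linarith
    obtain ⟨i, hi⟩ := exists_lt_of_lt_ciSup this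
    exact mem_iUnion.2 ⟨i, hi.le⟩
  calc P.real {ω | t < max 0 (⨆ i, Y i ω)} ≤ P.real (⋃ i, Y i ⁻¹' Ici t) := measureReal_mono hsub
    _ ≤ ∑ i, P.real (Y i ⁻¹' Ici t) := measureReal_iUnion_fintype_le _
    _ = ∑ i, (gaussianReal 0 (v i)).real (Ici t) := by
        simp_rw [← hYv, map_measureReal_apply (hY _) measurableSet_Ici]
    _ ≤ ∑ i, v i / s * exp (-t ^ 2 / (2 * s)) :=
        Finset.sum_le_sum fun i _ ↦ gaussianReal_real_Ici_le_mul_exp (hvs i) hst ht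
    _ = (∑ i, (v i : ℝ)) / s * exp (-t ^ 2 / (2 * s)) := by rw [← Finset.sum_mul, Finset.sum_div]

lemma measureReal_lt_max_zero_iSup_le_exp [IsFiniteMeasure P] {ι : Type*} [Fintype ι]
    {Y : ι → Ω → ℝ} (hY : ∀ i, Measurable (Y i)) {v : ι → ℝ≥0}
    (hYv : ∀ i, P.map (Y i) = gaussianReal 0 (v i)) {ε t : ℝ} (hε : 0 < ε)
    (hvε : ∀ i, v i ≤ ε ^ 2) (hv : ∑ i, (v i : ℝ) ≤ 1) (ht0 : 0 < t) (ht : 2 * ε ^ 2 ≤ t ^ 2)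
    (htε : 8 * ε ^ 2 * log (1 / ε) ≤ t ^ 2) :
    P.real {ω | t < max 0 (⨆ i, Y i ω)} ≤ exp (-(1 / (4 * ε ^ 2)) * t ^ 2) := by
  have hhalf : exp (-(1 / (4 * ε ^ 2)) * t ^ 2) ≤ ε ^ 2 :=
    calc exp (-(1 / (4 * ε ^ 2)) * t ^ 2) ≤ exp (log (ε ^ 2)) := by
          rw [exp_le_exp, log_pow, ← neg_neg (log ε), ← log_inv, ← one_div]
          have : 2 * log (1 / ε) ≤ t ^ 2 / (4 * ε ^ 2) := by
            rw [le_div_iff₀ (by positivity)]; linarith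
          push_cast; rw [neg_mul, one_div_mul_eq_div]; linarith
      _ = ε ^ 2 := exp_log (by positivity)
  calc P.real {ω | t < max 0 (⨆ i, Y i ω)}
      ≤ (∑ i, (v i : ℝ)) / ε ^ 2 * exp (-t ^ 2 / (2 * ε ^ 2)) :=
        measureReal_lt_max_zero_iSup_le hY hYv hvε ht ht0
    _ ≤ exp (-t ^ 2 / (2 * ε ^ 2)) / ε ^ 2 := by
        rw [div_mul_eq_mul_div]
        gcongr
        exact mul_le_of_le_one_left (exp_nonneg _) hv
    _ = exp (-(1 / (4 * ε ^ 2)) * t ^ 2) * (exp (-(1 / (4 * ε ^ 2)) * t ^ 2) / ε ^ 2) := by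
        rw [← mul_div_assoc, ← exp_add]
        congr 2
        field_simp
        ring
    _ ≤ exp (-(1 / (4 * ε ^ 2)) * t ^ 2) :=
        mul_le_of_le_one_right (exp_nonneg _) ((div_le_one (by positivity)).2 hhalf)

lemma integral_le_add_sqrt_pi_div_of_measureReal_lt_le [IsProbabilityMeasure P] {f : Ω → ℝ}
    (hf : 0 ≤ f) (hfm : AEMeasurable f P) {t₀ c : ℝ} (ht₀ : 0 ≤ t₀) (hc : 0 < c)
    (htail : ∀ t, t₀ < t → P.real {ω | t < f ω} ≤ exp (-c * t ^ 2)) :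
    ∫ ω, f ω ∂P ≤ t₀ + √(π / c) / 2 := by
  have hf' : 0 ≤ᵐ[P] f := ae_of_all _ hf
  rw [integral_eq_lintegral_of_nonneg_ae hf' hfm.aestronglyMeasurable,
    lintegral_eq_lintegral_meas_lt P hf' hfm]
  refine ENNReal.toReal_le_of_le_ofReal (by positivity) ?_
  have hnear : ∫⁻ t in Ioc 0 t₀, P {ω | t < f ω} ≤ ENNReal.ofReal t₀ :=
    calc ∫⁻ t in Ioc 0 t₀, P {ω | t < f ω} ≤ ∫⁻ _ in Ioc 0 t₀, 1 :=
          lintegral_mono fun _ ↦ prob_le_one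
      _ = ENNReal.ofReal t₀ := by simp
  have hfar : ∫⁻ t in Ioi t₀, P {ω | t < f ω} ≤ ENNReal.ofReal (√(π / c) / 2) :=
    calc ∫⁻ t in Ioi t₀, P {ω | t < f ω}
        ≤ ∫⁻ t in Ioi t₀, ENNReal.ofReal (exp (-c * t ^ 2)) := by
          refine setLIntegral_mono (by fun_prop) fun t ht ↦ ?_
          rw [← ofReal_measureReal]
          exact ENNReal.ofReal_le_ofReal (htail t ht)
      _ ≤ ∫⁻ t in Ioi 0, ENNReal.ofReal (exp (-c * t ^ 2)) :=
          lintegral_mono_set (Ioi_subset_Ioi ht₀)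
      _ = ENNReal.ofReal (√(π / c) / 2) := by
          rw [← integral_gaussian_Ioi, ofReal_integral_eq_lintegral_ofReal
            (integrable_exp_neg_mul_sq hc).integrableOn (ae_of_all _ fun _ ↦ (exp_pos _).le)]
  calc ∫⁻ t in Ioi 0, P {ω | t < f ω}
      = (∫⁻ t in Ioc 0 t₀, P {ω | t < f ω}) + ∫⁻ t in Ioi t₀, P {ω | t < f ω} := by
        rw [← lintegral_union measurableSet_Ioi Ioc_disjoint_Ioi_same, Ioc_union_Ioi_eq_Ioi ht₀]
    _ ≤ ENNReal.ofReal t₀ + ENNReal.ofReal (√(π / c) / 2) := add_le_add hnear hfar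
    _ = ENNReal.ofReal (t₀ + √(π / c) / 2) := (ENNReal.ofReal_add ht₀ (by positivity)).symm

end

theorem expected_max_small_variance_bound :
    ∃ C : ℝ, 0 < C ∧
      ∀ (ε : ℝ), 0 < ε → ε ≤ 1 / 2 →
      ∀ (m : ℕ), 0 < m →
      ∀ (Ω : Type) (_ : MeasurableSpace Ω) (P : Measure Ω), IsProbabilityMeasure P →
      ∀ (Y : Fin m → Ω → ℝ) (S : Matrix (Fin m) (Fin m) ℝ),
        S.PosSemidef →
        (∀ i, Measurable (Y i)) →
        (∀ a : Fin m → ℝ,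
          Measure.map (fun ω => ∑ i, a i * Y i ω) P
            = gaussianReal 0 (Real.toNNReal (∑ i, ∑ j, a i * S i j * a j))) →
        (∀ i, S i i ≤ ε ^ 2) →
        (∑ i, S i i) ≤ 1 →
        (∫ ω, max 0 (⨆ i, Y i ω) ∂P) ≤ C * ε * Real.sqrt (Real.log (1 / ε)) := by
  refine ⟨6, by norm_num, fun ε hε hε_half m _ Ω _ P _ Y S hS hY hYS hdiag htrace ↦ ?_⟩
  set L := log (1 / ε)
  have hL : log 2 ≤ L := log_le_log two_pos (by rw [le_one_div two_pos hε]; linarith)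
  have hL0 : 0 < L := (log_pos one_lt_two).trans_le hL
  have hlog2 := log_two_gt_d9
  have hvar : ∀ i, ((S i i).toNNReal : ℝ) = S i i := fun i ↦ Real.coe_toNNReal _ hS.diag_nonneg
  have htail : ∀ t, 3 * ε * √L < t →
      P.real {ω | t < max 0 (⨆ i, Y i ω)} ≤ exp (-(1 / (4 * ε ^ 2)) * t ^ 2) := by
    intro t ht
    have ht2 : 9 * ε ^ 2 * L ≤ t ^ 2 := by
      nlinarith [sq_sqrt hL0.le, mul_self_le_mul_self (by positivity) ht.le]
    exact measureReal_lt_max_zero_iSup_le_exp hY (map_eq_gaussianReal_diag hYS) hε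
      (fun i ↦ (hvar i).trans_le (hdiag i)) (by simpa only [hvar])
      (lt_of_le_of_lt (by positivity) ht) (by nlinarith) (by nlinarith)
  calc ∫ ω, max 0 (⨆ i, Y i ω) ∂P
      ≤ 3 * ε * √L + √(π / (1 / (4 * ε ^ 2))) / 2 :=
        integral_le_add_sqrt_pi_div_of_measureReal_lt_le (fun _ ↦ le_max_left _ _)
          (measurable_const.max (Measurable.iSup hY)).aemeasurable (by positivity) (by positivity)
          htail
    _ = 3 * ε * √L + ε * √π := by
        rw [show π / (1 / (4 * ε ^ 2)) = (2 * ε) ^ 2 * π by field_simp; ring,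
          sqrt_mul (sq_nonneg _), sqrt_sq (by positivity)]
        ring
    _ ≤ 6 * ε * √L := by
        have : √π ≤ 3 * √L := by
          rw [show 3 * √L = √(3 ^ 2 * L) by rw [sqrt_mul' _ hL0.le, sqrt_sq (by norm_num)]]
          exact sqrt_le_sqrt (by nlinarith [pi_lt_d2])
        nlinarith
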